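/- Let 0 ≤ α < n and 0 < ε < 1, and let J ⊆ I ⊆ K be cubes in ℝⁿ with dist(J, ℝⁿ∖I) > (1/2) ℓ(J)^ε ℓ(I)^{1−ε}. Then for every positive locally finite Borel measure σ on ℝⁿ: P^α(J, 1_{K∖I} σ) ≤ C (ℓ(J)/ℓ(I))^{1 − ε(n+1−α)} P^α(I, 1_{K∖I} σ), with C depending only on n, α and ε. -/

import Mathlib

open MeasureTheory
open scoped ENNReal NNReal

noncomputable section

/-- An axis-parallel half-open cube in `ℝⁿ`, given by its corner `a` and side length `l`. -/
structure QCube (n : ℕ) where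
  a : Fin n → ℝ
  l : ℝ

/-- The half-open cube as a subset of `ℝⁿ`. -/
def QCube.pts {n : ℕ} (Q : QCube n) : Set (EuclideanSpace ℝ (Fin n)) :=
  {x | ∀ i, Q.a i ≤ x i ∧ x i < Q.a i + Q.l}

/-- The center of a cube. -/
def QCube.center {n : ℕ} (Q : QCube n) : EuclideanSpace ℝ (Fin n) :=
  (EuclideanSpace.equiv (Fin n) ℝ).symm fun i => Q.a i + Q.l / 2

/-- The concentric dilate `γQ` of a cube `Q`. -/
def QCube.dilate {n : ℕ} (Q : QCube n) (γ : ℝ) : QCube n :=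
  ⟨fun i => Q.a i + Q.l / 2 - γ * Q.l / 2, γ * Q.l⟩

/-- The `m`-weighted `α`-fractional Poisson integral
`P^α_m(Q,μ) = ∫ ℓ(Q)^m / (ℓ(Q)+|y−c_Q|)^{n+m−α} dμ(y)`; `P^α = P^α_1`. -/
def poissonM {n : ℕ} (α m : ℝ) (Q : QCube n)
    (μ : Measure (EuclideanSpace ℝ (Fin n))) : ℝ≥0∞ :=
  ∫⁻ y, ENNReal.ofReal (Q.l ^ m / (Q.l + dist y Q.center) ^ ((n : ℝ) + m - α)) ∂μ

/-! The two Poisson kernels are compared pointwise on `K ∖ I`. For `y ∉ I` the separation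
hypothesis gives `|y - c_J| > ½ ℓ(J)^ε ℓ(I)^(1-ε) = ½ ℓ(I) (ℓ(J)/ℓ(I))^ε`, so
`ℓ(I) ≤ 2 (ℓ(I)/ℓ(J))^ε |y - c_J|`; with `|c_J - c_I| ≤ √n ℓ(I)/2` this yields
`ℓ(I) + |y - c_I| ≤ 3 (1 + √n/2) (ℓ(I)/ℓ(J))^ε (ℓ(J) + |y - c_J|)`. Raising this to the power
`p = n + 1 - α > 0` and multiplying by `ℓ(J)` gives the kernel inequality with the factor
`(ℓ(J)/ℓ(I))^(1 - ε p)`, which is then integrated against `1_{K∖I} σ`. -/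

lemma add_le_mul_rpow_mul_add {ε A lJ lI dJ dI : ℝ} (hε : 0 ≤ ε) (hlJ : 0 < lJ) (hJI : lJ ≤ lI)
    (hA : 0 ≤ A) (hdJ : 1 / 2 * lJ ^ ε * lI ^ (1 - ε) ≤ dJ) (hdI : dI ≤ dJ + A * lI) :
    lI + dI ≤ 3 * (1 + A) * (lI / lJ) ^ ε * (lJ + dJ) := by
  have hlI : 0 < lI := hlJ.trans_le hJI
  have hr : 1 ≤ (lI / lJ) ^ ε := Real.one_le_rpow ((one_le_div hlJ).2 hJI) hε
  have hdJ0 : 0 ≤ dJ := le_trans (by positivity) hdJ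
  have hsplit : lI = lJ ^ ε * lI ^ (1 - ε) * (lI / lJ) ^ ε := by
    rw [Real.div_rpow hlI.le hlJ.le, mul_comm (lJ ^ ε), mul_assoc, mul_div_cancel₀ _
      (Real.rpow_pos_of_pos hlJ ε).ne', ← Real.rpow_add hlI, sub_add_cancel, Real.rpow_one]
  have hlI_le : lI ≤ 2 * (lI / lJ) ^ ε * dJ := by
    nth_rewrite 1 [hsplit]
    nlinarith
  calc lI + dI ≤ (1 + A) * lI + dJ := by linarith
    _ ≤ (1 + A) * (2 * (lI / lJ) ^ ε * dJ) + (1 + A) * (lI / lJ) ^ ε * dJ := by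
        gcongr
        nlinarith
    _ ≤ 3 * (1 + A) * (lI / lJ) ^ ε * (lJ + dJ) := by
        have : 0 ≤ (1 + A) * (lI / lJ) ^ ε * lJ := by positivity
        linarith

lemma div_rpow_le_of_le_mul_rpow_mul {p ε c lJ lI t s : ℝ} (hp : 0 < p) (hlJ : 0 < lJ)
    (hlI : 0 < lI) (ht : 0 < t) (hs : 0 < s) (hc : 0 < c) (h : s ≤ c * (lI / lJ) ^ ε * t) :
    lJ / t ^ p ≤ c ^ p * (lJ / lI) ^ (1 - ε * p) * (lI / s ^ p) := by
  set r := (lI / lJ) ^ ε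
  have hr : 0 < r := by positivity
  have hscale : (lJ / lI) ^ (1 - ε * p) * lI = lJ * r ^ p := by
    rw [← Real.rpow_mul (by positivity), Real.rpow_sub (by positivity), Real.rpow_one,
      ← inv_div lI lJ, Real.inv_rpow (by positivity)]
    field_simp
  have hsp : s ^ p ≤ (c * r) ^ p * t ^ p := by
    rw [← Real.mul_rpow (by positivity) ht.le]
    exact Real.rpow_le_rpow hs.le h hp.le
  calc lJ / t ^ p = lJ * (c * r) ^ p / ((c * r) ^ p * t ^ p) := by
        field_simp
    _ ≤ lJ * (c * r) ^ p / s ^ p := by gcongr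
    _ = c ^ p * ((lJ / lI) ^ (1 - ε * p) * lI) / s ^ p := by
        rw [hscale, Real.mul_rpow hc.le hr.le]
        ring
    _ = c ^ p * (lJ / lI) ^ (1 - ε * p) * (lI / s ^ p) := by ring

lemma EuclideanSpace.dist_le_sqrt_card_mul {ι : Type*} [Fintype ι] {x y : EuclideanSpace ℝ ι}
    {r : ℝ} (hr : 0 ≤ r) (h : ∀ i, |x i - y i| ≤ r) : dist x y ≤ √(Fintype.card ι) * r := by
  calc dist x y = √(∑ i, dist (x i) (y i) ^ 2) := EuclideanSpace.dist_eq x y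
    _ ≤ √(∑ _i : ι, r ^ 2) := by
        gcongr with i
        exact (Real.dist_eq _ _).trans_le (h i)
    _ = √(Fintype.card ι) * r := by
        rw [Finset.sum_const, Finset.card_univ, nsmul_eq_mul, Real.sqrt_mul (Nat.cast_nonneg _),
          Real.sqrt_sq hr]

lemma lt_dist_of_ofReal_lt_biInf_edist {X : Type*} [PseudoMetricSpace X] {s t : Set X}
    {a : ℝ} (h : ENNReal.ofReal a < ⨅ (x ∈ s) (y ∈ t), edist x y) {x y : X} (hx : x ∈ s)
    (hy : y ∈ t) : a < dist x y := by
  have := h.trans_le ((biInf_le _ hx).trans (biInf_le _ hy))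
  rw [edist_dist, ENNReal.ofReal_lt_ofReal_iff'] at this
  exact this.1

namespace QCube

variable {n : ℕ}

lemma add_const_mem_pts (Q : QCube n) {δ : ℝ} (h0 : 0 ≤ δ) (hl : δ < Q.l) :
    (EuclideanSpace.equiv (Fin n) ℝ).symm (fun i => Q.a i + δ) ∈ Q.pts :=
  fun i => show Q.a i ≤ Q.a i + δ ∧ Q.a i + δ < Q.a i + Q.l from ⟨by linarith, by linarith⟩

lemma center_apply (Q : QCube n) (i : Fin n) : Q.center i = Q.a i + Q.l / 2 := rfl

lemma center_mem {Q : QCube n} (h : 0 < Q.l) : Q.center ∈ Q.pts :=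
  Q.add_const_mem_pts (by linarith) (by linarith)

lemma a_le_a_of_pts_subset {J I : QCube n} (hJ : 0 < J.l) (h : J.pts ⊆ I.pts) (i : Fin n) :
    I.a i ≤ J.a i :=
  (h (J.add_const_mem_pts le_rfl hJ) i).1.trans_eq (add_zero _)

lemma a_add_l_le_of_pts_subset {J I : QCube n} (hJ : 0 < J.l) (h : J.pts ⊆ I.pts) (i : Fin n) :
    J.a i + J.l ≤ I.a i + I.l := by
  refine le_of_forall_lt fun c hc => ?_
  have hmem : J.a i + max 0 (c - J.a i) < I.a i + I.l :=
    (h (J.add_const_mem_pts (le_max_left 0 _) (max_lt hJ (by linarith))) i).2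
  linarith [le_max_right 0 (c - J.a i)]

lemma l_le_of_pts_subset {J I : QCube n} (hJ : 0 < J.l) (h : J.pts ⊆ I.pts) (i : Fin n) :
    J.l ≤ I.l := by
  linarith [a_le_a_of_pts_subset hJ h i, a_add_l_le_of_pts_subset hJ h i]

lemma dist_center_le_of_pts_subset {J I : QCube n} (hJ : 0 < J.l) (hI : 0 ≤ I.l)
    (h : J.pts ⊆ I.pts) :
    dist J.center I.center ≤ √n * (I.l / 2) := by
  have hIJ : ∀ i, I.a i ≤ J.a i ∧ J.a i + J.l ≤ I.a i + I.l := fun i =>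
    ⟨a_le_a_of_pts_subset hJ h i, a_add_l_le_of_pts_subset hJ h i⟩
  simpa using EuclideanSpace.dist_le_sqrt_card_mul (x := J.center) (y := I.center)
    (by positivity) fun i => by
      rw [center_apply, center_apply, abs_le]
      constructor <;> linarith [hIJ i]

lemma poisson_kernel_le {J I : QCube n} {p ε : ℝ} (hp : 0 < p) (hε : 0 ≤ ε)
    (hJ : 0 < J.l) (hJI : J.pts ⊆ I.pts) (i : Fin n) {y : EuclideanSpace ℝ (Fin n)}
    (hy : 1 / 2 * J.l ^ ε * I.l ^ (1 - ε) < dist y J.center) :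
    J.l / (J.l + dist y J.center) ^ p
      ≤ (3 * (1 + √n / 2)) ^ p * (J.l / I.l) ^ (1 - ε * p)
        * (I.l / (I.l + dist y I.center) ^ p) := by
  have hJI_l := l_le_of_pts_subset hJ hJI i
  have hI : 0 < I.l := hJ.trans_le hJI_l
  have hdI : dist y I.center ≤ dist y J.center + √n / 2 * I.l := by
    have := dist_center_le_of_pts_subset hJ hI.le hJI
    linarith [dist_triangle y J.center I.center]
  refine div_rpow_le_of_le_mul_rpow_mul hp hJ hI (by positivity) (by positivity)
    (by positivity) ?_
  exact add_le_mul_rpow_mul_add hε hJ hJI_l (by positivity) hy.le hdI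

end QCube

theorem statement10_general (n : ℕ) (α ε : ℝ) (hn : 1 ≤ n) (hαn : α < n) (hε0 : 0 < ε) :
    ∃ C : ℝ, 0 < C ∧
      ∀ J I K : QCube n, 0 < J.l → 0 < I.l → 0 < K.l →
        J.pts ⊆ I.pts → I.pts ⊆ K.pts →
        ENNReal.ofReal (1 / 2 * J.l ^ ε * I.l ^ (1 - ε))
          < ⨅ (x ∈ J.pts) (y ∈ I.ptsᶜ), edist x y →
        ∀ σ : Measure (EuclideanSpace ℝ (Fin n)), IsLocallyFiniteMeasure σ →
          poissonM α 1 J (σ.restrict (K.pts \ I.pts))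
            ≤ ENNReal.ofReal (C * (J.l / I.l) ^ (1 - ε * ((n : ℝ) + 1 - α)))
              * poissonM α 1 I (σ.restrict (K.pts \ I.pts)) := by
  have hp : 0 < (n : ℝ) + 1 - α := by linarith
  set p := (n : ℝ) + 1 - α
  refine ⟨(3 * (1 + √n / 2)) ^ p, by positivity, ?_⟩
  intro J I K hJ _ _ hJI _ hsep σ _
  have hkernel : ∀ y ∈ K.pts \ I.pts,
      ENNReal.ofReal (J.l ^ (1 : ℝ) / (J.l + dist y J.center) ^ p)
        ≤ ENNReal.ofReal ((3 * (1 + √n / 2)) ^ p * (J.l / I.l) ^ (1 - ε * p))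
          * ENNReal.ofReal (I.l ^ (1 : ℝ) / (I.l + dist y I.center) ^ p) := by
    intro y hy
    have hsep_y : 1 / 2 * J.l ^ ε * I.l ^ (1 - ε) < dist y J.center := by
      rw [dist_comm]
      exact lt_dist_of_ofReal_lt_biInf_edist hsep (J.center_mem hJ) hy.2
    rw [← ENNReal.ofReal_mul (by positivity), Real.rpow_one, Real.rpow_one]
    exact ENNReal.ofReal_le_ofReal (QCube.poisson_kernel_le hp hε0.le hJ hJI ⟨0, hn⟩ hsep_y)
  exact (setLIntegral_mono (by fun_prop) hkernel).trans_eq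
    (lintegral_const_mul' _ _ ENNReal.ofReal_ne_top)

/-- The fractional Poisson inequality: if `J ⊆ I ⊆ K` are cubes with
`dist(J, ℝⁿ∖I) > ½ ℓ(J)^ε ℓ(I)^{1−ε}`, then
`P^α(J, 1_{K∖I}σ) ≤ C (ℓ(J)/ℓ(I))^{1−ε(n+1−α)} P^α(I, 1_{K∖I}σ)` with `C = C(n,α,ε)`. -/
theorem statement10 (n : ℕ) (α ε : ℝ) (hn : 1 ≤ n) (hα0 : 0 ≤ α) (hαn : α < n)
    (hε0 : 0 < ε) (hε1 : ε < 1) :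
    ∃ C : ℝ, 0 < C ∧
      ∀ J I K : QCube n, 0 < J.l → 0 < I.l → 0 < K.l →
        J.pts ⊆ I.pts → I.pts ⊆ K.pts →
        ENNReal.ofReal (1 / 2 * J.l ^ ε * I.l ^ (1 - ε))
          < ⨅ (x ∈ J.pts) (y ∈ I.ptsᶜ), edist x y →
        ∀ σ : Measure (EuclideanSpace ℝ (Fin n)), IsLocallyFiniteMeasure σ →
          poissonM α 1 J (σ.restrict (K.pts \ I.pts))
            ≤ ENNReal.ofReal (C * (J.l / I.l) ^ (1 - ε * ((n : ℝ) + 1 - α)))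
              * poissonM α 1 I (σ.restrict (K.pts \ I.pts)) :=
  statement10_general n α ε hn hαn hε0
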